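/- arXiv:2108.13835 — 2 statements merged into one kernel-verified Lean document; each statement's English description precedes it below -/
import Mathlib

section
/- Let A be an associative unital ℂ-algebra, let a be a nonzero complex number, and set d = −a² − a⁻². Suppose E₁, …, E_{n−1} ∈ A satisfy the Temperley–Lieb relations: E_i² = d·E_i for all i, E_i E_j = E_j E_i whenever |i − j| ≥ 2, and E_i E_{i±1} E_i = E_i for all adjacent pairs. Then there exists a group homomorphism φ_n from the Artin braid group B_n to the group of units Aˣ of A such that φ_n(σ_i) = a·1 + a⁻¹·E_i for every i = 1, …, n−1; in particular each a·1 + a⁻¹·E_i is invertible with inverse a⁻¹·1 + a·E_i. (This is the statement that σ_i ↦ A·1 + A⁻¹E_i defines a representation of the braid group in the Temperley–Lieb algebra when d = −A² − A⁻².) -/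
/-- The braid relations on the free group on `m` generators `σ₀, …, σ_{m-1}`:
`σᵢσⱼσᵢ⁻¹σⱼ⁻¹` whenever `|i - j| ≥ 2`, and `σᵢσⱼσᵢ(σⱼσᵢσⱼ)⁻¹` whenever `j = i + 1`. -/
def braidRels (m : ℕ) : Set (FreeGroup (Fin m)) :=
  {r | (∃ i j : Fin m, (i : ℕ) + 2 ≤ (j : ℕ) ∧
          r = FreeGroup.of i * FreeGroup.of j * (FreeGroup.of i)⁻¹ * (FreeGroup.of j)⁻¹) ∨
       (∃ i j : Fin m, (i : ℕ) + 1 = (j : ℕ) ∧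
          r = FreeGroup.of i * FreeGroup.of j * FreeGroup.of i *
                (FreeGroup.of j * FreeGroup.of i * FreeGroup.of j)⁻¹)}

/-- The Artin braid group `B_n`, presented by the generators `σ₁, …, σ_{n-1}`
(indexed here by `Fin (n-1)`) subject to the braid relations. -/
abbrev BraidGroup (n : ℕ) := PresentedGroup (braidRels (n - 1))

/-- The `i`-th Artin generator of the braid group `B_n`. -/
def braidGen (n : ℕ) (i : Fin (n - 1)) : BraidGroup n := PresentedGroup.of i

/-- Let `A` be an associative unital ℂ-algebra, `a ≠ 0` a complex number, and set
`d = -a² - a⁻²`.  If `E₁, …, E_{n-1} ∈ A` satisfy the Temperley–Lieb relations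
`Eᵢ² = d·Eᵢ`, `EᵢEⱼ = EⱼEᵢ` for `|i - j| ≥ 2`, and `EᵢE_{i±1}Eᵢ = Eᵢ`, then
`σᵢ ↦ a·1 + a⁻¹·Eᵢ` defines a group homomorphism `B_n → Aˣ`; in particular each
`a·1 + a⁻¹·Eᵢ` is invertible with inverse `a⁻¹·1 + a·Eᵢ`. -/
theorem braidGroup_temperleyLieb_representation (n : ℕ) {A : Type*} [Ring A] [Algebra ℂ A]
    (a : ℂ) (ha : a ≠ 0) (E : Fin (n - 1) → A)
    (hidem : ∀ i, E i * E i = (-a ^ 2 - a⁻¹ ^ 2) • E i)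
    (hcomm : ∀ i j : Fin (n - 1), ((i : ℕ) + 2 ≤ (j : ℕ) ∨ (j : ℕ) + 2 ≤ (i : ℕ)) →
      E i * E j = E j * E i)
    (hadj : ∀ i j : Fin (n - 1), ((i : ℕ) + 1 = (j : ℕ) ∨ (j : ℕ) + 1 = (i : ℕ)) →
      E i * E j * E i = E i) :
    ∃ φ : BraidGroup n →* Aˣ,
      (∀ i : Fin (n - 1), (φ (braidGen n i) : A) = a • (1 : A) + a⁻¹ • E i) ∧
      ∀ i : Fin (n - 1),
        (a • (1 : A) + a⁻¹ • E i) * (a⁻¹ • (1 : A) + a • E i) = 1 ∧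
        (a⁻¹ • (1 : A) + a • E i) * (a • (1 : A) + a⁻¹ • E i) = 1 := by
  have hvi : ∀ i, (a • (1 : A) + a⁻¹ • E i) * (a⁻¹ • (1 : A) + a • E i) = 1 := by
    intro i
    simp only [mul_add, add_mul, smul_mul_smul_comm, one_mul, mul_one, hidem, smul_smul]
    match_scalars <;> field_simp <;> ring
  have hiv : ∀ i, (a⁻¹ • (1 : A) + a • E i) * (a • (1 : A) + a⁻¹ • E i) = 1 := by
    intro i
    simp only [mul_add, add_mul, smul_mul_smul_comm, one_mul, mul_one, hidem, smul_smul]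
    match_scalars <;> field_simp <;> ring
  set u : Fin (n - 1) → Aˣ := fun i =>
    ⟨a • (1 : A) + a⁻¹ • E i, a⁻¹ • (1 : A) + a • E i, hvi i, hiv i⟩ with hu
  have hbraid : ∀ i j : Fin (n - 1), ((i : ℕ) + 1 = (j : ℕ) ∨ (j : ℕ) + 1 = (i : ℕ)) →
      u i * u j * u i = u j * u i * u j := by
    intro i j hij
    have h1 : E i * E j * E i = E i := hadj i j hij
    have h2 : E j * E i * E j = E j := hadj j i (Or.symm hij)
    ext
    show (a • (1 : A) + a⁻¹ • E i) * (a • (1 : A) + a⁻¹ • E j) * (a • (1 : A) + a⁻¹ • E i)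
        = (a • (1 : A) + a⁻¹ • E j) * (a • (1 : A) + a⁻¹ • E i) * (a • (1 : A) + a⁻¹ • E j)
    simp only [mul_add, add_mul, smul_mul_smul_comm, one_mul, mul_one, smul_smul]
    rw [hidem i, hidem j, h1, h2]
    simp only [smul_smul]
    match_scalars <;> field_simp <;> ring
  have hcomm' : ∀ i j : Fin (n - 1), ((i : ℕ) + 2 ≤ (j : ℕ) ∨ (j : ℕ) + 2 ≤ (i : ℕ)) →
      u i * u j = u j * u i := by
    intro i j hij
    have h := hcomm i j hij
    ext
    show (a • (1 : A) + a⁻¹ • E i) * (a • (1 : A) + a⁻¹ • E j)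
        = (a • (1 : A) + a⁻¹ • E j) * (a • (1 : A) + a⁻¹ • E i)
    simp only [mul_add, add_mul, smul_mul_smul_comm, one_mul, mul_one, smul_smul, h]
    match_scalars <;> ring
  have hrels : ∀ r ∈ braidRels (n - 1), FreeGroup.lift u r = 1 := by
    intro r hr
    rcases hr with ⟨i, j, hij, rfl⟩ | ⟨i, j, hij, rfl⟩
    · simp only [map_mul, map_inv, FreeGroup.lift_apply_of]
      have h := hcomm' i j (Or.inl hij)
      rw [h]
      group
    · simp only [map_mul, map_inv, FreeGroup.lift_apply_of]
      have h := hbraid i j (Or.inl hij)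
      rw [h]
      group
  refine ⟨PresentedGroup.toGroup hrels, fun i => ?_, fun i => ⟨hvi i, hiv i⟩⟩
  rw [braidGen, PresentedGroup.toGroup.of]
end

section
/- The Temperley–Lieb algebra is finite dimensional: for every nonzero complex number d and every n ≥ 1, the unital associative ℂ-algebra TL_n(d) presented by generators e₁, …, e_{n−1} and relations e_i² = e_i for all i, e_i e_j = e_j e_i whenever |i − j| ≥ 2, and e_i e_{i±1} e_i = d⁻² e_i for all adjacent pairs, is a finite-dimensional ℂ-vector space, and its dimension is at most the n-th Catalan number c_n = (1/(n+1))·binom(2n, n). -/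
/-- The defining relations of the Temperley–Lieb algebra `TL_n(d)` on the free unital
associative ℂ-algebra on generators `e₀, …, e_{n-2}` (Jones' normalization):
`eᵢ² = eᵢ`, `eᵢeⱼ = eⱼeᵢ` for `|i - j| ≥ 2`, and `eᵢe_{i±1}eᵢ = d⁻²·eᵢ`. -/
inductive TLRel (n : ℕ) (d : ℂ) :
    FreeAlgebra ℂ (Fin (n - 1)) → FreeAlgebra ℂ (Fin (n - 1)) → Prop
  | idem (i : Fin (n - 1)) :
      TLRel n d (FreeAlgebra.ι ℂ i * FreeAlgebra.ι ℂ i) (FreeAlgebra.ι ℂ i)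
  | comm (i j : Fin (n - 1)) (h : (i : ℕ) + 2 ≤ (j : ℕ) ∨ (j : ℕ) + 2 ≤ (i : ℕ)) :
      TLRel n d (FreeAlgebra.ι ℂ i * FreeAlgebra.ι ℂ j)
        (FreeAlgebra.ι ℂ j * FreeAlgebra.ι ℂ i)
  | adj (i j : Fin (n - 1)) (h : (i : ℕ) + 1 = (j : ℕ) ∨ (j : ℕ) + 1 = (i : ℕ)) :
      TLRel n d (FreeAlgebra.ι ℂ i * FreeAlgebra.ι ℂ j * FreeAlgebra.ι ℂ i)
        ((d ^ 2)⁻¹ • FreeAlgebra.ι ℂ i)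

/-- The Temperley–Lieb algebra `TL_n(d)`: the unital associative ℂ-algebra presented by
generators `e₁, …, e_{n-1}` and the relations `TLRel`. -/
abbrev TL (n : ℕ) (d : ℂ) := RingQuot (TLRel n d)

namespace TLaux

variable (n : ℕ) (d : ℂ)

noncomputable def E (a : ℕ) : TL n d :=
  if h : a < n - 1 then RingQuot.mkAlgHom ℂ (TLRel n d) (FreeAlgebra.ι ℂ ⟨a, h⟩) else 1

variable {n d}

lemma E_def {a : ℕ} (h : a < n - 1) :
    E n d a = RingQuot.mkAlgHom ℂ (TLRel n d) (FreeAlgebra.ι ℂ ⟨a, h⟩) := dif_pos h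

lemma E_idem {a : ℕ} (h : a < n - 1) : E n d a * E n d a = E n d a := by
  rw [E_def h, ← map_mul]
  exact RingQuot.mkAlgHom_rel ℂ (TLRel.idem ⟨a, h⟩)

lemma E_comm {a b : ℕ} (hab : a + 2 ≤ b) (hb : b < n - 1) :
    E n d a * E n d b = E n d b * E n d a := by
  have ha : a < n - 1 := lt_of_le_of_lt (by omega) hb
  rw [E_def ha, E_def hb, ← map_mul, ← map_mul]
  exact RingQuot.mkAlgHom_rel ℂ (TLRel.comm ⟨a, ha⟩ ⟨b, hb⟩ (Or.inl hab))

lemma E_adj {a b : ℕ} (hab : a + 1 = b ∨ b + 1 = a) (ha : a < n - 1) (hb : b < n - 1) :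
    E n d a * E n d b * E n d a = (d ^ 2)⁻¹ • E n d a := by
  rw [E_def ha, E_def hb, ← map_mul, ← map_mul, ← map_smul]
  exact RingQuot.mkAlgHom_rel ℂ (TLRel.adj ⟨a, ha⟩ ⟨b, hb⟩ hab)

/-- The block `e_i e_{i-1} ⋯ e_j` (equal to `1` if `i < j`). -/
noncomputable def Bl (i j : ℕ) : TL n d :=
  (((List.range' j (i + 1 - j)).reverse).map (E n d)).prod

lemma Bl_empty {i j : ℕ} (h : i < j) : (Bl i j : TL n d) = 1 := by
  unfold Bl
  rw [Nat.sub_eq_zero_of_le h]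
  simp

lemma Bl_cons {i j : ℕ} (h : j ≤ i + 1) :
    (Bl (i + 1) j : TL n d) = E n d (i + 1) * Bl i j := by
  unfold Bl
  have : i + 1 + 1 - j = (i + 1 - j) + 1 := by omega
  rw [this, List.range'_concat]
  have : j + 1 * (i + 1 - j) = i + 1 := by omega
  rw [this]
  simp

lemma Bl_single (i : ℕ) : (Bl i i : TL n d) = E n d i := by
  unfold Bl
  simp

lemma Bl_snoc {i j : ℕ} (h : j ≤ i) :
    (Bl i j : TL n d) = Bl i (j + 1) * E n d j := by
  unfold Bl
  have h1 : i + 1 - j = (i + 1 - (j + 1)) + 1 := by omega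
  rw [h1, List.range'_succ]
  simp

lemma Bl_split {i j k : ℕ} (h1 : j ≤ k + 1) (h2 : k ≤ i) :
    (Bl i j : TL n d) = Bl i (k + 1) * Bl k j := by
  unfold Bl
  have h3 : i + 1 - j = (i + 1 - (k + 1)) + (k + 1 - j) := by omega
  have h4 : j + 1 * (k + 1 - j) = k + 1 := by omega
  rw [h3, Nat.add_comm (i+1-(k+1)), ← List.range'_append (s := j) (m := k+1-j) (n := i+1-(k+1)) (step := 1), h4]
  simp

lemma E_comm_list {a : ℕ} (ha : a < n - 1) :
    ∀ l : List ℕ, (∀ x ∈ l, x + 2 ≤ a ∨ a + 2 ≤ x) → (∀ x ∈ l, x < n - 1) →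
      E n d a * (l.map (E n d)).prod = (l.map (E n d)).prod * E n d a := by
  intro l
  induction l with
  | nil => simp
  | cons x xs ih =>
    intro h1 h2
    have hx : E n d a * E n d x = E n d x * E n d a := by
      rcases h1 x (by simp) with h | h
      · exact (E_comm h ha).symm
      · exact E_comm h (h2 x (by simp))
    simp only [List.map_cons, List.prod_cons, ← mul_assoc, hx]
    rw [mul_assoc, ih (fun y hy => h1 y (by simp [hy])) (fun y hy => h2 y (by simp [hy])),
      ← mul_assoc]

lemma mem_blockList {i j x : ℕ} (hx : x ∈ (List.range' j (i + 1 - j)).reverse) :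
    j ≤ x ∧ x ≤ i := by
  rw [List.mem_reverse, List.mem_range'] at hx
  obtain ⟨k, hk, rfl⟩ := hx
  omega

lemma E_comm_Bl {a i j : ℕ} (ha : a < n - 1) (hi : i < n - 1)
    (h : i + 2 ≤ a ∨ a + 2 ≤ j) :
    E n d a * Bl i j = Bl i j * E n d a := by
  unfold Bl
  apply E_comm_list ha
  · intro x hx; have := mem_blockList hx; omega
  · intro x hx; have := mem_blockList hx; omega

lemma list_comm_Bl {i₁ j₁ : ℕ} (hi₁ : i₁ < n - 1) :
    ∀ l : List ℕ, (∀ x ∈ l, i₁ + 2 ≤ x ∧ x < n - 1) →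
      ((l.map (E n d)).prod) * Bl i₁ j₁ = Bl i₁ j₁ * (l.map (E n d)).prod := by
  intro l
  induction l with
  | nil => simp
  | cons x xs ih =>
    intro hl
    have hx := hl x (by simp)
    simp only [List.map_cons, List.prod_cons, mul_assoc]
    rw [ih (fun y hy => hl y (by simp [hy])), ← mul_assoc, ← mul_assoc,
      E_comm_Bl hx.2 hi₁ (Or.inl hx.1)]

lemma Bl_comm_Bl {i₁ j₁ i₂ j₂ : ℕ} (h : i₁ + 2 ≤ j₂) (hi₁ : i₁ < n - 1) (hi₂ : i₂ < n - 1) :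
    (Bl i₂ j₂ : TL n d) * Bl i₁ j₁ = Bl i₁ j₁ * Bl i₂ j₂ := by
  apply list_comm_Bl hi₁
  intro x hx
  have := mem_blockList hx
  omega


lemma Bl_absorb {i j : ℕ} (h : j ≤ i) (hi : i < n - 1) :
    (Bl i j : TL n d) * E n d j = Bl i j := by
  rw [Bl_snoc h, mul_assoc, E_idem (by omega)]

/-- `e_a e_b e_a = d⁻² e_a` with a trailing factor. -/
lemma adj_tail {a b : ℕ} (hab : a + 1 = b ∨ b + 1 = a) (ha : a < n - 1) (hb : b < n - 1)
    (x : TL n d) : E n d a * (E n d b * (E n d a * x)) = (d ^ 2)⁻¹ • (E n d a * x) := by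
  rw [← mul_assoc, ← mul_assoc, E_adj hab ha hb, smul_mul_assoc]

/-- Rule G1: `B(i,j) e_{j+1} = d⁻² B(i,j+1)` for `j+1 ≤ i`. -/
lemma ruleG1 {i j : ℕ} (h : j + 1 ≤ i) (hi : i < n - 1) :
    (Bl i j : TL n d) * E n d (j + 1) = (d ^ 2)⁻¹ • Bl i (j + 1) := by
  have hsp : (Bl i j : TL n d) = Bl i (j + 2) * (E n d (j+1) * E n d j) := by
    rw [Bl_split (show j ≤ j + 1 + 1 by omega) (show j + 1 ≤ i from h),
      Bl_cons (by omega), Bl_single]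
  have hadj : E n d (j+1) * E n d j * E n d (j+1) = (d ^ 2)⁻¹ • E n d (j+1) :=
    E_adj (Or.inr rfl) (by omega) (by omega)
  calc (Bl i j : TL n d) * E n d (j + 1)
      = Bl i (j + 2) * (E n d (j+1) * E n d j * E n d (j+1)) := by
        rw [hsp]; simp only [mul_assoc]
    _ = (d ^ 2)⁻¹ • (Bl i (j + 2) * E n d (j+1)) := by rw [hadj, mul_smul_comm]
    _ = (d ^ 2)⁻¹ • Bl i (j + 1) := by rw [← Bl_snoc (show j + 1 ≤ i from h)]

/-- Rule G2: `B(i,j) e_{c+2} = d⁻² B(i,c+2) B(c,j)` for `j ≤ c`, `c+2 ≤ i`. -/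
lemma ruleG2 {i j c : ℕ} (hjc : j ≤ c) (hci : c + 2 ≤ i) (hi : i < n - 1) :
    (Bl i j : TL n d) * E n d (c + 2) = (d ^ 2)⁻¹ • (Bl i (c + 2) * Bl c j) := by
  have hsp : (Bl i j : TL n d) = Bl i (c + 3) * (E n d (c+2) * (E n d (c+1) * Bl c j)) := by
    rw [Bl_split (show j ≤ c + 2 + 1 by omega) (show c + 2 ≤ i from hci),
      Bl_cons (by omega), Bl_cons (by omega)]
  have hcomm : (Bl c j : TL n d) * E n d (c + 2) = E n d (c + 2) * Bl c j :=
    (E_comm_Bl (by omega) (by omega) (Or.inl (by omega))).symm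
  calc (Bl i j : TL n d) * E n d (c + 2)
      = Bl i (c+3) * (E n d (c+2) * (E n d (c+1) * (Bl c j * E n d (c+2)))) := by
        rw [hsp]; simp only [mul_assoc]
    _ = Bl i (c+3) * (E n d (c+2) * (E n d (c+1) * (E n d (c+2) * Bl c j))) := by rw [hcomm]
    _ = Bl i (c+3) * ((d ^ 2)⁻¹ • (E n d (c+2) * Bl c j)) := by
        rw [adj_tail (Or.inr rfl) (by omega) (by omega)]
    _ = (d ^ 2)⁻¹ • (Bl i (c + 2) * Bl c j) := by
        rw [mul_smul_comm, ← mul_assoc, ← Bl_snoc (show c + 2 ≤ i from hci)]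

/-- Rule T: `B(i',j') B(u+2,b) = d⁻² B(u,j') B(i',b)` for `j' < b ≤ u+2 ≤ i'`, `j' ≤ u`. -/
lemma ruleT {i' j' u b : ℕ} (hj'b : j' < b) (hbt : b ≤ u + 2) (hti : u + 2 ≤ i')
    (hju : j' ≤ u) (hi : i' < n - 1) :
    (Bl i' j' : TL n d) * Bl (u + 2) b = (d ^ 2)⁻¹ • (Bl u j' * Bl i' b) := by
  have h3 : (Bl i' (u+2) : TL n d) * Bl u j' = Bl u j' * Bl i' (u+2) :=
    Bl_comm_Bl (by omega) (by omega) hi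
  calc (Bl i' j' : TL n d) * Bl (u + 2) b
      = Bl i' j' * E n d (u + 2) * Bl (u + 1) b := by
        rw [Bl_cons (show b ≤ u + 1 + 1 from hbt), mul_assoc]
    _ = (d ^ 2)⁻¹ • (Bl i' (u + 2) * Bl u j' * Bl (u + 1) b) := by
        rw [ruleG2 hju hti hi, smul_mul_assoc]
    _ = (d ^ 2)⁻¹ • (Bl u j' * (Bl i' (u + 2) * Bl (u + 1) b)) := by
        rw [h3, mul_assoc]
    _ = (d ^ 2)⁻¹ • (Bl u j' * Bl i' b) := by
        rw [← Bl_split (show b ≤ u + 1 + 1 from hbt) (show u + 1 ≤ i' by omega)]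

/-- Rule M0: `B(i,j) B(i+1,b) = d⁻² B(i,b) B(i+1,j+2)` for `b ≤ j ≤ i`. -/
lemma ruleM0 : ∀ i j b : ℕ, b ≤ j → j ≤ i → i + 1 < n - 1 →
    (Bl i j : TL n d) * Bl (i + 1) b = (d ^ 2)⁻¹ • (Bl i b * Bl (i + 1) (j + 2)) := by
  intro i
  induction i with
  | zero =>
    intro j b hbj hji hi
    interval_cases j
    interval_cases b
    rw [Bl_empty (show 0 + 1 < 0 + 2 by omega), Bl_single,
      Bl_cons (show (0:ℕ) ≤ 0 + 1 by omega), Bl_single, mul_one, ← mul_assoc,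
      E_adj (Or.inl rfl) (by omega) hi]
  | succ i ih =>
    intro j b hbj hji hi
    rcases Nat.lt_or_ge j (i+1) with hlt | hge
    · -- j ≤ i : inductive step
      have e3 : E n d (i+2) * Bl i j = Bl i j * E n d (i+2) :=
        E_comm_Bl (by omega) (by omega) (Or.inl (by omega))
      have e5 : (Bl i b : TL n d) * E n d (i+2) = E n d (i+2) * Bl i b :=
        (E_comm_Bl (by omega) (by omega) (Or.inl (by omega))).symm
      calc (Bl (i+1) j : TL n d) * Bl (i+1+1) b
          = E n d (i+1) * (Bl i j * (E n d (i+2) * Bl (i+1) b)) := by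
            rw [Bl_cons (show j ≤ i + 1 by omega), Bl_cons (show b ≤ i + 1 + 1 by omega)]
            simp only [mul_assoc]
        _ = E n d (i+1) * (E n d (i+2) * (Bl i j * Bl (i+1) b)) := by
            rw [← mul_assoc (Bl i j), ← e3, mul_assoc]
        _ = E n d (i+1) * (E n d (i+2) * ((d^2)⁻¹ • (Bl i b * Bl (i+1) (j+2)))) := by
            rw [ih j b hbj (by omega) (by omega)]
        _ = (d^2)⁻¹ • (E n d (i+1) * Bl i b * (E n d (i+2) * Bl (i+1) (j+2))) := by
            rw [mul_smul_comm, mul_smul_comm, ← mul_assoc (E n d (i+2)), ← e5,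
              mul_assoc (Bl i b), ← mul_assoc (E n d (i+1))]
        _ = (d^2)⁻¹ • (Bl (i+1) b * Bl (i+1+1) (j+2)) := by
            rw [← Bl_cons (show b ≤ i + 1 by omega), ← Bl_cons (show j + 2 ≤ i + 1 + 1 by omega)]
    · -- j = i+1
      have hj : j = i + 1 := by omega
      subst hj
      calc (Bl (i+1) (i+1) : TL n d) * Bl (i+1+1) b
          = E n d (i+1) * (E n d (i+2) * (E n d (i+1) * Bl i b)) := by
            rw [Bl_single, Bl_cons (show b ≤ i + 1 + 1 by omega),
              Bl_cons (show b ≤ i + 1 by omega)]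
        _ = (d^2)⁻¹ • (E n d (i+1) * Bl i b) := by
            rw [adj_tail (Or.inl rfl) (by omega) (by omega)]
        _ = (d^2)⁻¹ • (Bl (i+1) b * Bl (i+1+1) (i+1+2)) := by
            rw [← Bl_cons (show b ≤ i + 1 by omega),
              Bl_empty (show i+1+1 < i+1+2 by omega), mul_one]

/-- Rule M: `B(i',j') B(t,b) = d⁻² B(i',b) B(t,j'+2)` for `b ≤ j' ≤ i' < t`. -/
lemma ruleM {i' j' t b : ℕ} (hb : b ≤ j') (hj : j' ≤ i') (hit : i' < t) (ht : t < n - 1) :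
    (Bl i' j' : TL n d) * Bl t b = (d ^ 2)⁻¹ • (Bl i' b * Bl t (j' + 2)) := by
  have h1 : (Bl i' j' : TL n d) * Bl t (i' + 2) = Bl t (i' + 2) * Bl i' j' :=
    (Bl_comm_Bl (by omega) (by omega) ht).symm
  have h3 : (Bl t (i' + 2) : TL n d) * Bl i' b = Bl i' b * Bl t (i' + 2) :=
    Bl_comm_Bl (by omega) (by omega) ht
  calc (Bl i' j' : TL n d) * Bl t b
      = Bl i' j' * Bl t (i' + 2) * Bl (i' + 1) b := by
        rw [Bl_split (show b ≤ i' + 1 + 1 by omega) (show i' + 1 ≤ t by omega), mul_assoc]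
    _ = Bl t (i' + 2) * (Bl i' j' * Bl (i' + 1) b) := by rw [h1, mul_assoc]
    _ = (d^2)⁻¹ • (Bl t (i' + 2) * Bl i' b * Bl (i' + 1) (j' + 2)) := by
        rw [ruleM0 i' j' b hb hj (by omega), mul_smul_comm]
        simp only [mul_assoc]
    _ = (d^2)⁻¹ • (Bl i' b * Bl t (j' + 2)) := by
        rw [h3, mul_assoc,
          ← Bl_split (show j' + 2 ≤ i' + 1 + 1 by omega) (show i' + 1 ≤ t by omega)]


/-! ### Normal forms -/

noncomputable def word (n : ℕ) (d : ℂ) (L : List (ℕ × ℕ)) : TL n d :=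
  (L.map fun p => Bl p.1 p.2).prod

def valid (n : ℕ) (L : List (ℕ × ℕ)) : Prop :=
  (∀ p ∈ L, p.2 ≤ p.1 ∧ p.1 < n - 1) ∧
    L.Pairwise (fun p q => p.1 < q.1 ∧ p.2 < q.2)

lemma word_nil : word n d [] = 1 := rfl

lemma word_snoc (L : List (ℕ × ℕ)) (i j : ℕ) :
    word n d (L ++ [(i, j)]) = word n d L * Bl i j := by
  unfold word; simp

lemma valid_nil : valid n [] := ⟨by simp, by simp⟩

lemma valid_snoc_iff {L : List (ℕ × ℕ)} {p : ℕ × ℕ} :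
    valid n (L ++ [p]) ↔
      valid n L ∧ (p.2 ≤ p.1 ∧ p.1 < n - 1) ∧ ∀ q ∈ L, q.1 < p.1 ∧ q.2 < p.2 := by
  unfold valid
  rw [List.pairwise_append]
  constructor
  · rintro ⟨h1, h2, h3, h4⟩
    exact ⟨⟨fun q hq => h1 q (by simp [hq]), h2⟩, h1 p (by simp),
      fun q hq => h4 q hq p (by simp)⟩
  · rintro ⟨⟨h1, h2⟩, hp, h3⟩
    refine ⟨?_, h2, by simp, ?_⟩
    · intro q hq
      rcases List.mem_append.1 hq with h | h
      · exact h1 q h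
      · simp at h; subst h; exact hp
    · intro a ha b hb
      simp at hb; subst hb; exact h3 a ha

lemma insertB : ∀ L : List (ℕ × ℕ), valid n L → ∀ t b : ℕ, b ≤ t → t < n - 1 →
    (∀ p ∈ L, p.2 < b) →
    ∃ (c : ℂ) (L' : List (ℕ × ℕ)), valid n L' ∧
      (word n d L) * Bl t b = c • word n d L' ∧
      (∀ p ∈ L', p.2 ≤ b) ∧
      (∀ T : ℕ, (∀ p ∈ L, p.1 ≤ T) → t ≤ T → ∀ p ∈ L', p.1 ≤ T) := by
  intro L
  induction L using List.reverseRecOn with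
  | nil =>
    intro _ t b hbt ht _
    refine ⟨1, [(t, b)], ?_, ?_, ?_, ?_⟩
    · exact valid_snoc_iff.2 ⟨valid_nil, ⟨hbt, ht⟩, by simp⟩
    · rw [word_nil, one_mul, one_smul, show ([(t,b)] : List (ℕ×ℕ)) = [] ++ [(t,b)] by simp,
        word_snoc, word_nil, one_mul]
    · simp
    · intro T _ htT p hp
      simp at hp; subst hp; exact htT
  | append_singleton v q ih =>
    obtain ⟨i', j'⟩ := q
    intro hL t b hbt ht hbot
    rw [valid_snoc_iff] at hL
    obtain ⟨hv, ⟨hji, hi⟩, hvq⟩ := hL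
    have hj'b : j' < b := hbot (i', j') (by simp)
    have hvbot : ∀ p ∈ v, p.2 < b := fun p hp => hbot p (by simp [hp])
    rcases Nat.lt_or_ge i' t with hit | hti
    · -- append
      refine ⟨1, (v ++ [(i', j')]) ++ [(t, b)], ?_, ?_, ?_, ?_⟩
      · refine valid_snoc_iff.2 ⟨valid_snoc_iff.2 ⟨hv, ⟨hji, hi⟩, hvq⟩, ⟨hbt, ht⟩, ?_⟩
        intro p hp
        rcases List.mem_append.1 hp with h | h
        · have := hvq p h; have := hvbot p h; omega
        · simp at h; subst h; simp; omega
      · rw [one_smul, word_snoc (v ++ [(i', j')]) t b]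
      · intro p hp
        rcases List.mem_append.1 hp with h | h
        · rcases List.mem_append.1 h with h | h
          · exact le_of_lt (hvbot p h)
          · simp at h; subst h; simpa using le_of_lt hj'b
        · simp at h; subst h; simp
      · intro T hT htT p hp
        rcases List.mem_append.1 hp with h | h
        · exact hT p h
        · simp at h; subst h; simpa using htT
    · -- t ≤ i'
      rcases Nat.lt_or_ge t (j' + 2) with hsm | hlg
      · -- t = j'+1 = b
        have htj : t = j' + 1 := by omega
        have hbj : b = j' + 1 := by omega
        subst htj; subst hbj
        refine ⟨(d ^ 2)⁻¹, v ++ [(i', j' + 1)], ?_, ?_, ?_, ?_⟩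
        · refine valid_snoc_iff.2 ⟨hv, ⟨by omega, hi⟩, ?_⟩
          intro q hq; have := hvq q hq; omega
        · rw [word_snoc, word_snoc, Bl_single, mul_assoc,
            ruleG1 (by omega) hi, mul_smul_comm]
        · intro p hp
          rcases List.mem_append.1 hp with h | h
          · exact le_of_lt (hvbot p h)
          · simp at h; subst h; simp
        · intro T hT htT p hp
          rcases List.mem_append.1 hp with h | h
          · exact hT p (by simp [h])
          · simp at h; subst h; simp
            exact le_trans (by omega) (hT (i', j') (by simp))
      · -- t ≥ j'+2 : rule T, recurse
        obtain ⟨u, rfl⟩ : ∃ u, t = u + 2 := ⟨t - 2, by omega⟩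
        obtain ⟨c₁, v', hv', heq, hbot', htop'⟩ :=
          ih hv u j' (by omega) (by omega) (fun p hp => hvq p hp |>.2)
        refine ⟨(d ^ 2)⁻¹ * c₁, v' ++ [(i', b)], ?_, ?_, ?_, ?_⟩
        · refine valid_snoc_iff.2 ⟨hv', ⟨by omega, hi⟩, ?_⟩
          intro q hq
          constructor
          · have := htop' (i' - 1) (fun p hp => by have := hvq p hp; omega) (by omega) q hq
            omega
          · have := hbot' q hq; omega
        · rw [word_snoc, word_snoc, mul_assoc,
            ruleT hj'b hbt hti (by omega) hi, mul_smul_comm, ← mul_assoc, heq,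
            smul_mul_assoc, smul_smul]
        · intro p hp
          rcases List.mem_append.1 hp with h | h
          · have := hbot' p h; omega
          · simp at h; subst h; simp
        · intro T hT htT p hp
          rcases List.mem_append.1 hp with h | h
          · exact htop' T (fun q hq => hT q (by simp [hq])) (by omega) p h
          · simp at h; subst h; simp
            exact hT (i', j') (by simp)


lemma insertT : ∀ L : List (ℕ × ℕ), valid n L → ∀ t b : ℕ, b ≤ t → t < n - 1 →
    (∀ p ∈ L, p.1 < t) →
    ∃ (c : ℂ) (L' : List (ℕ × ℕ)), valid n L' ∧
      (word n d L) * Bl t b = c • word n d L' ∧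
      (∀ p ∈ L', p.1 ≤ t) ∧
      (∀ p ∈ L', p.2 ≤ b ∨ ∃ q ∈ L, p.2 ≤ q.2 + 2 ∧ b ≤ q.2) := by
  intro L
  induction L using List.reverseRecOn with
  | nil =>
    intro _ t b hbt ht _
    refine ⟨1, [(t, b)], ?_, ?_, ?_, ?_⟩
    · exact valid_snoc_iff.2 ⟨valid_nil, ⟨hbt, ht⟩, by simp⟩
    · rw [word_nil, one_mul, one_smul, show ([(t,b)] : List (ℕ×ℕ)) = [] ++ [(t,b)] by simp,
        word_snoc, word_nil, one_mul]
    · simp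
    · intro p hp
      simp at hp; subst hp; exact Or.inl le_rfl
  | append_singleton v q ih =>
    obtain ⟨i', j'⟩ := q
    intro hL t b hbt ht htop
    rw [valid_snoc_iff] at hL
    obtain ⟨hv, ⟨hji, hi⟩, hvq⟩ := hL
    have hit : i' < t := by have := htop (i', j') (by simp); simpa using this
    have hvtop : ∀ p ∈ v, p.1 < t := fun p hp => htop p (by simp [hp])
    rcases Nat.lt_or_ge j' b with hjb | hbj
    · -- append
      refine ⟨1, (v ++ [(i', j')]) ++ [(t, b)], ?_, ?_, ?_, ?_⟩
      · refine valid_snoc_iff.2 ⟨valid_snoc_iff.2 ⟨hv, ⟨hji, hi⟩, hvq⟩, ⟨hbt, ht⟩, ?_⟩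
        intro p hp
        rcases List.mem_append.1 hp with h | h
        · have := hvq p h; omega
        · simp at h; subst h; simp; omega
      · rw [one_smul, word_snoc (v ++ [(i', j')]) t b]
      · intro p hp
        rcases List.mem_append.1 hp with h | h
        · exact le_of_lt (htop p h)
        · simp at h; subst h; simp
      · intro p hp
        rcases List.mem_append.1 hp with h | h
        · refine Or.inl ?_
          rcases List.mem_append.1 h with h' | h'
          · have := (hvq p h').2; omega
          · simp at h'; subst h'; simpa using le_of_lt hjb
        · simp at h; subst h; exact Or.inl le_rfl
    · -- b ≤ j' : rule M, recurse
      obtain ⟨c₁, v', hv', heq, htop', hbot'⟩ :=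
        ih hv i' b (by omega) hi (fun p hp => (hvq p hp).1)
      have hbot'' : ∀ p ∈ v', p.2 < j' + 2 := by
        intro p hp
        rcases hbot' p hp with h | ⟨q, hq, h1, h2⟩
        · omega
        · have := (hvq q hq).2; omega
      rcases Nat.lt_or_ge t (j' + 2) with hsm | hlg
      · -- empty new block
        refine ⟨(d ^ 2)⁻¹ * c₁, v', hv', ?_, ?_, ?_⟩
        · rw [word_snoc, mul_assoc, ruleM hbj hji hit ht, mul_smul_comm, ← mul_assoc, heq,
            Bl_empty hsm, mul_one, smul_smul]
        · intro p hp; have := htop' p hp; omega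
        · intro p hp
          rcases hbot' p hp with h | ⟨q, hq, h1, h2⟩
          · exact Or.inl h
          · exact Or.inr ⟨q, by simp [hq], h1, h2⟩
      · refine ⟨(d ^ 2)⁻¹ * c₁, v' ++ [(t, j' + 2)], ?_, ?_, ?_, ?_⟩
        · refine valid_snoc_iff.2 ⟨hv', ⟨hlg, ht⟩, ?_⟩
          intro q hq
          refine ⟨by have := htop' q hq; omega, hbot'' q hq⟩
        · rw [word_snoc, word_snoc, mul_assoc, ruleM hbj hji hit ht, mul_smul_comm,
            ← mul_assoc, heq, smul_mul_assoc, smul_smul]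
        · intro p hp
          rcases List.mem_append.1 hp with h | h
          · have := htop' p h; omega
          · simp at h; subst h; simp
        · intro p hp
          rcases List.mem_append.1 hp with h | h
          · rcases hbot' p h with h' | ⟨q, hq, h1, h2⟩
            · exact Or.inl h'
            · exact Or.inr ⟨q, by simp [hq], h1, h2⟩
          · simp at h; subst h
            exact Or.inr ⟨(i', j'), by simp, by simp, hbj⟩

lemma genMul : ∀ L : List (ℕ × ℕ), valid n L → ∀ a : ℕ, a < n - 1 →
    ∃ (c : ℂ) (L' : List (ℕ × ℕ)), valid n L' ∧
      (word n d L) * E n d a = c • word n d L' ∧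
      (∀ T : ℕ, (∀ p ∈ L, p.1 ≤ T) → a ≤ T → ∀ p ∈ L', p.1 ≤ T) := by
  intro L
  induction L using List.reverseRecOn with
  | nil =>
    intro _ a ha
    refine ⟨1, [(a, a)], ?_, ?_, ?_⟩
    · exact valid_snoc_iff.2 ⟨valid_nil, ⟨le_refl _, ha⟩, by simp⟩
    · rw [word_nil, one_mul, one_smul, show ([(a,a)] : List (ℕ×ℕ)) = [] ++ [(a,a)] by simp,
        word_snoc, word_nil, one_mul, Bl_single]
    · intro T _ haT p hp
      simp at hp; subst hp; exact haT
  | append_singleton v q ih =>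
    obtain ⟨i', j'⟩ := q
    intro hL a ha
    have hL' := hL
    rw [valid_snoc_iff] at hL'
    obtain ⟨hv, ⟨hji, hi⟩, hvq⟩ := hL'
    rcases Nat.lt_or_ge j' a with hja | haj
    · -- a > j' : insertB
      obtain ⟨c, L', h1, h2, _, h4⟩ :=
        insertB (v ++ [(i', j')]) hL a a (le_refl _) ha
          (by intro p hp
              rcases List.mem_append.1 hp with h | h
              · have := hvq p h; omega
              · simp at h; subst h; simpa)
      exact ⟨c, L', h1, by rwa [Bl_single] at h2, h4⟩
    · rcases Nat.eq_or_lt_of_le haj with rfl | hlt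
      · -- a = j'
        refine ⟨1, v ++ [(i', a)], valid_snoc_iff.2 ⟨hv, ⟨hji, hi⟩, hvq⟩, ?_, ?_⟩
        · rw [word_snoc, one_smul, mul_assoc, Bl_absorb hji hi]
        · intro T hT _ p hp
          exact hT p hp
      · rcases Nat.eq_or_lt_of_le hlt with hj | hlt2
        · -- a + 1 = j'
          have hext : (Bl i' j' : TL n d) * E n d a = Bl i' a := by
            rw [show j' = a + 1 from hj.symm]
            exact (Bl_snoc (by omega)).symm
          obtain ⟨c, L', h1, h2, h3, _⟩ :=
            insertT v hv i' a (by omega) hi (fun p hp => (hvq p hp).1)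
          refine ⟨c, L', h1, ?_, ?_⟩
          · rw [word_snoc, mul_assoc, hext, h2]
          · intro T hT haT p hp
            have := h3 p hp
            have := hT (i', j') (by simp)
            simp at this; omega
        · -- a + 2 ≤ j'
          have hcomm : (Bl i' j' : TL n d) * E n d a = E n d a * Bl i' j' :=
            (E_comm_Bl ha hi (Or.inr hlt2)).symm
          obtain ⟨c₁, v', h1, h2, h3⟩ := ih hv a ha
          have hv'top : ∀ p ∈ v', p.1 < i' := by
            intro p hp
            have := h3 (i' - 1) (fun q hq => by have := (hvq q hq).1; omega)
              (by omega) p hp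
            omega
          obtain ⟨c₂, L', h4, h5, h6, _⟩ :=
            insertT v' h1 i' j' hji hi hv'top
          refine ⟨c₁ * c₂, L', h4, ?_, ?_⟩
          · rw [word_snoc, mul_assoc, hcomm, ← mul_assoc, h2, smul_mul_assoc, h5,
              smul_smul]
          · intro T hT haT p hp
            have := h6 p hp
            have := hT (i', j') (by simp)
            simp at this; omega


/-! ### Spanning -/

lemma word_mem_span {L : List (ℕ × ℕ)} (hL : valid n L) :
    (word n d L) ∈ Submodule.span ℂ {x : TL n d | ∃ M, valid n M ∧ word n d M = x} :=
  Submodule.subset_span ⟨L, hL, rfl⟩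

lemma span_mul_E {a : ℕ} (ha : a < n - 1) {x : TL n d}
    (hx : x ∈ Submodule.span ℂ {x : TL n d | ∃ M, valid n M ∧ word n d M = x}) :
    x * E n d a ∈ Submodule.span ℂ {x : TL n d | ∃ M, valid n M ∧ word n d M = x} := by
  induction hx using Submodule.span_induction with
  | mem x hxm =>
    obtain ⟨L, hL, rfl⟩ := hxm
    obtain ⟨c, L', hL', heq, -⟩ := genMul L hL a ha
    rw [heq]
    exact Submodule.smul_mem _ _ (word_mem_span hL')
  | zero => rw [zero_mul]; exact Submodule.zero_mem _
  | add x y _ _ hx hy => rw [add_mul]; exact Submodule.add_mem _ hx hy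
  | smul c x _ hx => rw [smul_mul_assoc]; exact Submodule.smul_mem _ _ hx

lemma span_words_eq_top :
    Submodule.span ℂ {x : TL n d | ∃ M, valid n M ∧ word n d M = x} = ⊤ := by
  set V := Submodule.span ℂ {x : TL n d | ∃ M, valid n M ∧ word n d M = x} with hV
  have h1 : (1 : TL n d) ∈ V := by
    have : word n d [] = 1 := word_nil
    exact this ▸ word_mem_span valid_nil
  have key : ∀ y : FreeAlgebra ℂ (Fin (n - 1)), ∀ x ∈ V,
      x * RingQuot.mkAlgHom ℂ (TLRel n d) y ∈ V := by
    intro y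
    induction y using FreeAlgebra.induction with
    | grade0 r =>
      intro x hx
      rw [AlgHom.commutes, ← Algebra.commutes, ← Algebra.smul_def]
      exact Submodule.smul_mem _ _ hx
    | grade1 i =>
      intro x hx
      have hE : E n d (i : ℕ) = RingQuot.mkAlgHom ℂ (TLRel n d) (FreeAlgebra.ι ℂ i) := by
        rw [E_def i.isLt]
      rw [← hE]
      exact span_mul_E i.isLt hx
    | mul a b iha ihb =>
      intro x hx
      rw [map_mul, ← mul_assoc]
      exact ihb _ (iha x hx)
    | add a b iha ihb =>
      intro x hx
      rw [map_add, mul_add]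
      exact Submodule.add_mem _ (iha x hx) (ihb x hx)
  rw [eq_top_iff]
  intro z _
  obtain ⟨y, rfl⟩ := RingQuot.mkAlgHom_surjective ℂ (TLRel n d) z
  simpa using key y 1 h1

end TLaux


namespace TLtree

/-- Dyck word of a binary tree. -/
def toW : Tree Unit → List Bool
  | BinaryTree.nil => []
  | BinaryTree.node _ l r => true :: (toW l ++ false :: toW r)

lemma toW_length : ∀ t : Tree Unit, (toW t).length = 2 * t.numNodes := by
  intro t
  induction t with
  | nil => rfl
  | node _ l r ihl ihr => simp [toW, Tree.numNodes, BinaryTree.numNodes, ihl, ihr]; omega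

/-- Balanced (Dyck) words. -/
def bal (w : List Bool) : Prop :=
  (∀ k, (w.take k).count false ≤ (w.take k).count true) ∧ w.count true = w.count false

lemma parse : ∀ N w, w.length ≤ N → bal w → ∃ t : Tree Unit, toW t = w := by
  intro N
  induction N with
  | zero =>
    intro w hw _
    have : w = [] := List.eq_nil_of_length_eq_zero (by omega)
    exact ⟨Tree.nil, by simp [this, toW]⟩
  | succ N ihN =>
    intro w hw hbal
    rcases w with _ | ⟨x, v⟩
    · exact ⟨Tree.nil, rfl⟩
    · have hx : x = true := by
        by_contra h
        have hx' : x = false := by cases x <;> simp_all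
        have := hbal.1 1
        subst hx'
        simp [List.count_cons] at this
      subst hx
      have htot : v.count false = v.count true + 1 := by
        have := hbal.2
        simp [List.count_cons] at this
        omega
      have hpre : ∀ j, (v.take j).count false ≤ (v.take j).count true + 1 := by
        intro j
        have := hbal.1 (j + 1)
        rw [List.take_succ_cons] at this
        simp [List.count_cons] at this
        omega
      have hex : ∃ k, (v.take k).count false = (v.take k).count true + 1 :=
        ⟨v.length, by rw [List.take_of_length_le (le_refl _)]; omega⟩
      classical
      have hk₀ := Nat.find_spec hex
      have hmin : ∀ j < Nat.find hex, ¬((v.take j).count false = (v.take j).count true + 1) :=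
        fun j hj => Nat.find_min hex hj
      have hk₀pos : 0 < Nat.find hex := by
        rcases Nat.eq_zero_or_pos (Nat.find hex) with h | h
        · exact absurd (h ▸ hk₀) (by simp)
        · exact h
      have hk₀len : Nat.find hex ≤ v.length := by
        by_contra h
        push_neg at h
        exact hmin v.length h (by rw [List.take_of_length_le (le_refl _)]; omega)
      obtain ⟨k₁, hk₁⟩ : ∃ k₁, Nat.find hex = k₁ + 1 := ⟨Nat.find hex - 1, by omega⟩
      rw [hk₁] at hk₀ hmin hk₀len
      have hlt : k₁ < v.length := by omega
      have hsplit : v.take (k₁ + 1) = v.take k₁ ++ [v[k₁]] := by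
        rw [List.take_succ, List.getElem?_eq_getElem hlt]
        rfl
      have hmid : v[k₁] = false ∧ (v.take k₁).count false = (v.take k₁).count true := by
        have hp := hpre k₁
        rcases Bool.eq_false_or_eq_true v[k₁] with he | he
        · exfalso
          rw [hsplit, he] at hk₀
          simp [List.count_append] at hk₀
          omega
        · rw [hsplit, he] at hk₀
          simp [List.count_append] at hk₀
          exact ⟨he, by omega⟩
      obtain ⟨hgk, hc0⟩ := hmid
      have hvsplit : v = v.take k₁ ++ false :: v.drop (k₁ + 1) := by
        conv_lhs => rw [← List.take_append_drop k₁ v]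
        rw [List.drop_eq_getElem_cons hlt, hgk]
      -- balance of w1
      have hbal1 : bal (v.take k₁) := by
        constructor
        · intro k
          rw [List.take_take]
          rcases Nat.lt_or_ge k k₁ with h | h
          · have h2 := hpre (min k k₁)
            have h3 := hmin (min k k₁) (by omega)
            omega
          · rw [min_eq_right (by omega)]
            omega
        · exact hc0.symm
      -- balance of w2
      have hcnt : ∀ j, ((v.take (k₁ + 1 + j)).count false
            = (v.take k₁).count true + 1 + ((v.drop (k₁+1)).take j).count false)
          ∧ ((v.take (k₁ + 1 + j)).count true
            = (v.take k₁).count true + ((v.drop (k₁+1)).take j).count true) := by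
        intro j
        rw [List.take_add, hsplit, hgk]
        constructor <;> simp [List.count_append, hc0] <;> omega
      have hbal2 : bal (v.drop (k₁ + 1)) := by
        constructor
        · intro k
          have h1 := hpre (k₁ + 1 + k)
          have h2 := (hcnt k).1
          have h3 := (hcnt k).2
          omega
        · have h2 := (hcnt v.length).1
          have h3 := (hcnt v.length).2
          have hf1 : v.take (k₁ + 1 + v.length) = v := List.take_of_length_le (by omega)
          have hf2 : (v.drop (k₁+1)).take v.length = v.drop (k₁+1) :=
            List.take_of_length_le (by simp)
          rw [hf1, hf2] at h2 h3
          omega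
      have hvN : v.length ≤ N := by
        simp at hw; omega
      have hl1 : (v.take k₁).length ≤ N := by
        simp [List.length_take]; omega
      have hl2 : (v.drop (k₁ + 1)).length ≤ N := by
        simp; omega
      obtain ⟨t1, ht1⟩ := ihN _ hl1 hbal1
      obtain ⟨t2, ht2⟩ := ihN _ hl2 hbal2
      exact ⟨Tree.node () t1 t2, by rw [toW, ht1, ht2, ← hvsplit]⟩

lemma bal_append_helper {A B : List Bool} (hA : bal A) (hB : bal B) :
    ∀ j, ((A ++ false :: B).take j).count false ≤ ((A ++ false :: B).take j).count true + 1 := by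
  intro j
  rw [List.take_append]
  rcases le_or_gt j A.length with h | h
  · have : j - A.length = 0 := by omega
    rw [this]
    have h1 := hA.1 j
    simp only [List.take_zero, List.append_nil]
    omega
  · rw [List.take_of_length_le (by omega)]
    obtain ⟨i, hi⟩ : ∃ i, j - A.length = i + 1 := ⟨j - A.length - 1, by omega⟩
    rw [hi, List.take_succ_cons]
    have h1 := hA.2
    have h2 := hB.1 i
    have h3 := hA.1 A.length
    rw [List.take_of_length_le (le_refl _)] at h3
    simp [List.count_append, List.count_cons]
    omega

lemma toW_bal : ∀ t : Tree Unit, bal (toW t) := by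
  intro t
  induction t with
  | nil => exact ⟨fun k => by simp [toW], rfl⟩
  | node _ l r ihl ihr =>
    constructor
    · intro k
      rcases k with _ | k
      · simp
      · rw [toW, List.take_succ_cons]
        have := bal_append_helper ihl ihr k
        simp [List.count_cons]
        omega
    · have h1 := ihl.2
      have h2 := ihr.2
      simp [toW, List.count_cons, List.count_append]
      omega

end TLtree


namespace TLcode

/-- The two-letter code of position `t`. -/
def pc (L : List (ℕ × ℕ)) (t : ℕ) : List Bool :=
  [decide (∃ p ∈ L, p.2 = t), !decide (∃ p ∈ L, p.1 = t)]

def body (L : List (ℕ × ℕ)) (s : ℕ) : List Bool := (List.range s).flatMap (pc L)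

def code (m : ℕ) (L : List (ℕ × ℕ)) : List Bool := true :: (body L m ++ [false])

lemma body_succ (L : List (ℕ × ℕ)) (s : ℕ) : body L (s+1) = body L s ++ pc L s := by
  rw [body, List.range_succ, List.flatMap_append, body]
  simp [pc]

lemma body_length (L : List (ℕ × ℕ)) : ∀ s, (body L s).length = 2 * s := by
  intro s
  induction s with
  | zero => rfl
  | succ s ih => rw [body_succ]; simp [pc, ih]; omega

/-- top/bottom prefix counters -/
def cA (L : List (ℕ × ℕ)) (s : ℕ) : ℕ := L.countP (fun p => p.1 < s)
def cB (L : List (ℕ × ℕ)) (s : ℕ) : ℕ := L.countP (fun p => p.2 < s)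

lemma countP_split (l : List (ℕ × ℕ)) (f : ℕ × ℕ → ℕ) (s : ℕ) :
    l.countP (fun p => f p < s + 1)
      = l.countP (fun p => f p < s) + l.countP (fun p => f p = s) := by
  induction l with
  | nil => rfl
  | cons x xs ih =>
    simp only [List.countP_cons, ih]
    rcases Nat.lt_trichotomy (f x) s with h | h | h
    · have e1 : f x < s + 1 := by omega
      have e3 : ¬ f x = s := by omega
      simp [h, e1, e3]
      omega
    · have e1 : f x < s + 1 := by omega
      have e2 : ¬ f x < s := by omega
      simp [h, e1, e2]
      omega
    · have e1 : ¬ f x < s + 1 := by omega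
      have e2 : ¬ f x < s := by omega
      have e3 : ¬ f x = s := by omega
      simp [e1, e2, e3]

lemma countP_eq_ite : ∀ (l : List (ℕ × ℕ)) (f : ℕ × ℕ → ℕ) (s : ℕ),
    (l.map f).Nodup →
    l.countP (fun p => f p = s) = if (∃ p ∈ l, f p = s) then 1 else 0 := by
  intro l
  induction l with
  | nil => intro f s _; simp
  | cons x xs ih =>
    intro f s hnd
    simp only [List.map_cons, List.nodup_cons] at hnd
    rw [List.countP_cons]
    by_cases hx : f x = s
    · have hz : xs.countP (fun p => f p = s) = 0 := by
        rw [List.countP_eq_zero]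
        intro p hp
        simp only [decide_eq_true_eq]
        intro hps
        exact hnd.1 (hx ▸ hps ▸ List.mem_map.2 ⟨p, hp, rfl⟩)
      simp [hz, hx]
    · rw [ih f s hnd.2]
      have : (∃ p ∈ x :: xs, f p = s) ↔ (∃ p ∈ xs, f p = s) := by
        constructor
        · rintro ⟨p, hp, hps⟩
          rcases List.mem_cons.1 hp with rfl | hp'
          · exact absurd hps hx
          · exact ⟨p, hp', hps⟩
        · rintro ⟨p, hp, hps⟩; exact ⟨p, by simp [hp], hps⟩
      simp only [hx, decide_eq_true_eq, if_false, ite_false, add_zero]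
      exact (if_congr this rfl rfl).symm

section Facts

variable {L : List (ℕ × ℕ)}
variable (hA : (L.map Prod.fst).Nodup) (hB : (L.map Prod.snd).Nodup)
variable (hji : ∀ p ∈ L, p.2 ≤ p.1)

include hA hB in
lemma body_counts : ∀ s, (body L s).count true = cB L s + (s - cA L s)
    ∧ (body L s).count false = cA L s + (s - cB L s)
    ∧ cA L s ≤ s ∧ cB L s ≤ s := by
  intro s
  induction s with
  | zero =>
    have hA0 : cA L 0 = 0 := by simp [cA]
    have hB0 : cB L 0 = 0 := by simp [cB]
    refine ⟨?_, ?_, by omega, by omega⟩ <;> simp [body, hA0, hB0]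
  | succ s ih =>
    obtain ⟨h1, h2, h3, h4⟩ := ih
    have hAs : cA L (s+1) = cA L s + (if (∃ p ∈ L, p.1 = s) then 1 else 0) := by
      rw [cA, countP_split L Prod.fst s, countP_eq_ite L Prod.fst s hA]; rfl
    have hBs : cB L (s+1) = cB L s + (if (∃ p ∈ L, p.2 = s) then 1 else 0) := by
      rw [cB, countP_split L Prod.snd s, countP_eq_ite L Prod.snd s hB]; rfl
    rw [body_succ]
    by_cases ha : (∃ p ∈ L, p.1 = s) <;> by_cases hb : (∃ p ∈ L, p.2 = s) <;>
      simp [pc, ha, hb, List.count_append, List.count_cons, hAs, hBs, h1, h2] <;>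
      omega

include hA hB hji in
lemma body_prefix : ∀ s k, ((body L s).take k).count false
    ≤ ((body L s).take k).count true + 1 := by
  intro s
  induction s with
  | zero => intro k; simp [body]
  | succ s ih =>
    intro k
    rw [body_succ, List.take_append, body_length]
    rcases le_or_gt k (2*s) with h | h
    · have : k - 2*s = 0 := by omega
      rw [this]
      simpa using ih k
    · rw [List.take_of_length_le (by rw [body_length]; omega)]
      obtain ⟨ht1, ht2, ht3, ht4⟩ := body_counts hA hB s
      have hABs : cA L s ≤ cB L s :=
        List.countP_mono_left (fun p hp hh => by
          have := hji p hp
          simp at hh ⊢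
          omega)
      have hABs1 : cA L (s+1) ≤ cB L (s+1) :=
        List.countP_mono_left (fun p hp hh => by
          have := hji p hp
          simp at hh ⊢
          omega)
      have hAs : cA L (s+1) = cA L s + (if (∃ p ∈ L, p.1 = s) then 1 else 0) := by
        rw [cA, countP_split L Prod.fst s, countP_eq_ite L Prod.fst s hA]; rfl
      have hBs : cB L (s+1) = cB L s + (if (∃ p ∈ L, p.2 = s) then 1 else 0) := by
        rw [cB, countP_split L Prod.snd s, countP_eq_ite L Prod.snd s hB]; rfl
      by_cases ha : (∃ p ∈ L, p.1 = s) <;> by_cases hb : (∃ p ∈ L, p.2 = s) <;>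
        simp only [ha, hb, if_true, if_false, ite_true, ite_false] at hAs hBs
      · -- both: piece [true, false]
        have hpc : pc L s = [true, false] := by simp [pc, ha, hb]
        rw [hpc]
        rcases le_or_gt 2 (k - 2*s) with hj2 | hj1
        · rw [List.take_of_length_le (by simp; omega)]
          simp [List.count_append]
          omega
        · rw [show k - 2*s = 1 by omega]
          simp [List.count_append]
          omega
      · -- top only: piece [false, false]
        have hpc : pc L s = [false, false] := by simp [pc, ha, hb]
        rw [hpc]
        rcases le_or_gt 2 (k - 2*s) with hj2 | hj1
        · rw [List.take_of_length_le (by simp; omega)]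
          simp [List.count_append]
          omega
        · rw [show k - 2*s = 1 by omega]
          simp [List.count_append]
          omega
      · -- bottom only: piece [true, true]
        have hpc : pc L s = [true, true] := by simp [pc, ha, hb]
        rw [hpc]
        rcases le_or_gt 2 (k - 2*s) with hj2 | hj1
        · rw [List.take_of_length_le (by simp; omega)]
          simp [List.count_append]
          omega
        · rw [show k - 2*s = 1 by omega]
          simp [List.count_append]
          omega
      · -- neither: piece [false, true]
        have hpc : pc L s = [false, true] := by simp [pc, ha, hb]
        rw [hpc]
        rcases le_or_gt 2 (k - 2*s) with hj2 | hj1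
        · rw [List.take_of_length_le (by simp; omega)]
          simp [List.count_append]
          omega
        · rw [show k - 2*s = 1 by omega]
          simp [List.count_append]
          omega

end Facts


lemma code_length (m : ℕ) (L : List (ℕ × ℕ)) : (code m L).length = 2 * m + 2 := by
  simp [code, body_length]

lemma zip_fst_snd : ∀ l : List (ℕ × ℕ), (l.map Prod.fst).zip (l.map Prod.snd) = l := by
  intro l
  induction l with
  | nil => rfl
  | cons x xs ih => simp [ih]

lemma body_pieces_eq (L₁ L₂ : List (ℕ × ℕ)) :
    ∀ s, body L₁ s = body L₂ s → ∀ t, t < s → pc L₁ t = pc L₂ t := by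
  intro s
  induction s with
  | zero => intro _ t ht; omega
  | succ s ih =>
    intro heq t ht
    rw [body_succ, body_succ] at heq
    obtain ⟨h1, h2⟩ := List.append_inj heq (by rw [body_length, body_length])
    rcases Nat.lt_or_ge t s with h | h
    · exact ih h1 t h
    · have : t = s := by omega
      exact this ▸ h2

lemma code_inj {m : ℕ} {L₁ L₂ : List (ℕ × ℕ)}
    (hb₁ : ∀ p ∈ L₁, p.2 ≤ p.1 ∧ p.1 < m) (hs₁ : L₁.Pairwise (fun p q => p.1 < q.1 ∧ p.2 < q.2))
    (hb₂ : ∀ p ∈ L₂, p.2 ≤ p.1 ∧ p.1 < m) (hs₂ : L₂.Pairwise (fun p q => p.1 < q.1 ∧ p.2 < q.2))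
    (h : code m L₁ = code m L₂) : L₁ = L₂ := by
  have hbody : body L₁ m = body L₂ m := by
    have := List.tail_eq_of_cons_eq h
    exact (List.append_inj this (by rw [body_length, body_length])).1
  have hpc := body_pieces_eq L₁ L₂ m hbody
  haveI : IsAntisymm ℕ (· < ·) := ⟨fun a b h1 h2 => absurd h2 (by omega)⟩
  have hmemf : ∀ t, (∃ p ∈ L₁, p.1 = t) ↔ (∃ p ∈ L₂, p.1 = t) := by
    intro t
    rcases Nat.lt_or_ge t m with hlt | hge
    · have hp := hpc t hlt
      simp only [pc, List.cons.injEq] at hp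
      have := hp.2.1
      rw [Bool.not_inj_iff, decide_eq_decide] at this
      exact this
    · constructor
      · rintro ⟨p, hp, rfl⟩; exact absurd (hb₁ p hp).2 (by omega)
      · rintro ⟨p, hp, rfl⟩; exact absurd (hb₂ p hp).2 (by omega)
  have hmems : ∀ t, (∃ p ∈ L₁, p.2 = t) ↔ (∃ p ∈ L₂, p.2 = t) := by
    intro t
    rcases Nat.lt_or_ge t m with hlt | hge
    · have hp := hpc t hlt
      simp only [pc, List.cons.injEq] at hp
      rw [decide_eq_decide] at hp
      exact hp.1
    · constructor
      · rintro ⟨p, hp, rfl⟩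
        have := hb₁ p hp; omega
      · rintro ⟨p, hp, rfl⟩
        have := hb₂ p hp; omega
  have hndf₁ : (L₁.map Prod.fst).Nodup :=
    (List.Pairwise.map Prod.fst (fun a b hab => hab.1) hs₁).nodup (r := (· < ·))
  have hndf₂ : (L₂.map Prod.fst).Nodup :=
    (List.Pairwise.map Prod.fst (fun a b hab => hab.1) hs₂).nodup (r := (· < ·))
  have hnds₁ : (L₁.map Prod.snd).Nodup :=
    (List.Pairwise.map Prod.snd (fun a b hab => hab.2) hs₁).nodup (r := (· < ·))
  have hnds₂ : (L₂.map Prod.snd).Nodup :=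
    (List.Pairwise.map Prod.snd (fun a b hab => hab.2) hs₂).nodup (r := (· < ·))
  have hf : L₁.map Prod.fst = L₂.map Prod.fst := by
    apply List.Perm.eq_of_pairwise'
      (List.Pairwise.map Prod.fst (fun a b hab => hab.1) hs₁)
      (List.Pairwise.map Prod.fst (fun a b hab => hab.1) hs₂)
      ((List.perm_ext_iff_of_nodup hndf₁ hndf₂).2 ?_)
    intro t
    simp only [List.mem_map]
    constructor
    · rintro ⟨p, hp, rfl⟩
      obtain ⟨q, hq, hqt⟩ := (hmemf p.1).1 ⟨p, hp, rfl⟩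
      exact ⟨q, hq, hqt⟩
    · rintro ⟨p, hp, rfl⟩
      obtain ⟨q, hq, hqt⟩ := (hmemf p.1).2 ⟨p, hp, rfl⟩
      exact ⟨q, hq, hqt⟩
  have hsnd : L₁.map Prod.snd = L₂.map Prod.snd := by
    apply List.Perm.eq_of_pairwise'
      (List.Pairwise.map Prod.snd (fun a b hab => hab.2) hs₁)
      (List.Pairwise.map Prod.snd (fun a b hab => hab.2) hs₂)
      ((List.perm_ext_iff_of_nodup hnds₁ hnds₂).2 ?_)
    intro t
    simp only [List.mem_map]
    constructor
    · rintro ⟨p, hp, rfl⟩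
      obtain ⟨q, hq, hqt⟩ := (hmems p.2).1 ⟨p, hp, rfl⟩
      exact ⟨q, hq, hqt⟩
    · rintro ⟨p, hp, rfl⟩
      obtain ⟨q, hq, hqt⟩ := (hmems p.2).2 ⟨p, hp, rfl⟩
      exact ⟨q, hq, hqt⟩
  calc L₁ = (L₁.map Prod.fst).zip (L₁.map Prod.snd) := (zip_fst_snd L₁).symm
    _ = (L₂.map Prod.fst).zip (L₂.map Prod.snd) := by rw [hf, hsnd]
    _ = L₂ := zip_fst_snd L₂

end TLcode



namespace TLcode

lemma code_bal {m : ℕ} {L : List (ℕ × ℕ)}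
    (hA : (L.map Prod.fst).Nodup) (hB : (L.map Prod.snd).Nodup)
    (hji : ∀ p ∈ L, p.2 ≤ p.1) (hall : ∀ p ∈ L, p.1 < m) :
    TLtree.bal (code m L) := by
  obtain ⟨h1, h2, h3, h4⟩ := body_counts hA hB m
  have hAm : cA L m = L.length := by
    rw [cA, List.countP_eq_length]
    intro p hp
    simpa using hall p hp
  have hBm : cB L m = L.length := by
    rw [cB, List.countP_eq_length]
    intro p hp
    have := hji p hp
    have := hall p hp
    simp; omega
  constructor
  · intro k
    rcases k with _ | k
    · simp
    · rw [code, List.take_succ_cons]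
      simp only [List.count_cons]
      have key : (List.take k (body L m ++ [false])).count false
          ≤ (List.take k (body L m ++ [false])).count true + 1 := by
        rw [List.take_append]
        rcases le_or_gt k (2*m) with h | h
        · rw [show k - (body L m).length = 0 by rw [body_length]; omega]
          simpa using body_prefix hA hB hji m k
        · rw [List.take_of_length_le (by rw [body_length]; omega),
            List.take_of_length_le (by simp; rw [body_length]; omega)]
          simp [List.count_append]
          omega
      simp
      omega
  · simp [code, List.count_append, List.count_cons, h1, h2, hAm, hBm]

end TLcode

open TLaux TLtree TLcode in
/-- The Temperley–Lieb algebra is finite dimensional: for every nonzero `d ∈ ℂ` and every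
`n ≥ 1`, `TL_n(d)` is a finite-dimensional ℂ-vector space of dimension at most the `n`-th
Catalan number `cₙ = (1/(n+1))·C(2n, n)`. -/
theorem tl_finiteDimensional (n : ℕ) (hn : 1 ≤ n) (d : ℂ) (hd : d ≠ 0) :
    FiniteDimensional ℂ (TL n d) ∧ Module.finrank ℂ (TL n d) ≤ catalan n := by
  classical
  -- subtype of normal forms
  let NF := {L : List (ℕ × ℕ) // valid n L}
  let Dy := {w : List Bool // TLtree.bal w ∧ w.length = 2 * n}
  let Tr := {t : Tree Unit // t.numNodes = n}
  -- facts extracted from validity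
  have hfacts : ∀ L : List (ℕ × ℕ), valid n L →
      ((L.map Prod.fst).Nodup ∧ (L.map Prod.snd).Nodup ∧ (∀ p ∈ L, p.2 ≤ p.1)
        ∧ (∀ p ∈ L, p.1 < n - 1)) := by
    intro L hL
    obtain ⟨h1, h2⟩ := hL
    haveI : IsIrrefl ℕ (· < ·) := ⟨fun a => by omega⟩
    refine ⟨(List.Pairwise.map Prod.fst (fun a b hab => hab.1) h2).nodup (r := (· < ·)),
      (List.Pairwise.map Prod.snd (fun a b hab => hab.2) h2).nodup (r := (· < ·)),
      fun p hp => (h1 p hp).1, fun p hp => (h1 p hp).2⟩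
  -- encoding into Dyck words
  have hcodelen : ∀ L : List (ℕ × ℕ), (code (n-1) L).length = 2 * n := by
    intro L
    rw [code_length]
    omega
  let enc : NF → Dy := fun L =>
    ⟨code (n-1) L.1, by
      obtain ⟨hA, hB, hji, hall⟩ := hfacts L.1 L.2
      exact code_bal hA hB hji hall, hcodelen L.1⟩
  have henc : Function.Injective enc := by
    intro L₁ L₂ h
    have h' : code (n-1) L₁.1 = code (n-1) L₂.1 := congrArg Subtype.val h
    obtain ⟨hA₁, hB₁, hji₁, hall₁⟩ := hfacts L₁.1 L₁.2
    obtain ⟨hA₂, hB₂, hji₂, hall₂⟩ := hfacts L₂.1 L₂.2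
    exact Subtype.ext (code_inj (fun p hp => ⟨hji₁ p hp, hall₁ p hp⟩) L₁.2.2
      (fun p hp => ⟨hji₂ p hp, hall₂ p hp⟩) L₂.2.2 h')
  -- trees onto Dyck words
  let dec : Tr → Dy := fun t =>
    ⟨toW t.1, toW_bal t.1, by rw [toW_length, t.2]⟩
  have hdec : Function.Surjective dec := by
    rintro ⟨w, hbal, hlen⟩
    obtain ⟨t, ht⟩ := parse w.length w le_rfl hbal
    have hnodes : t.numNodes = n := by
      have := toW_length t
      rw [ht, hlen] at this
      omega
    exact ⟨⟨t, hnodes⟩, Subtype.ext ht⟩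
  haveI : Fintype Tr := Fintype.subtype (BinaryTree.treesOfNumNodesEq n)
    (fun t => BinaryTree.mem_treesOfNumNodesEq)
  haveI : Finite Dy := Finite.of_surjective dec hdec
  haveI : Finite NF := Finite.of_injective enc henc
  have hcards : Nat.card NF ≤ catalan n := by
    calc Nat.card NF ≤ Nat.card Dy := Nat.card_le_card_of_injective enc henc
      _ ≤ Nat.card Tr := Nat.card_le_card_of_surjective dec hdec
      _ = catalan n := by
        rw [Nat.card_eq_fintype_card,
          Fintype.card_of_subtype (BinaryTree.treesOfNumNodesEq n)
            (fun t => BinaryTree.mem_treesOfNumNodesEq),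
          BinaryTree.treesOfNumNodesEq_card_eq_catalan]
  -- spanning
  let g : NF → TL n d := fun L => word n d L.1
  have hrange : Set.range g = {x : TL n d | ∃ M, valid n M ∧ word n d M = x} := by
    ext x
    constructor
    · rintro ⟨L, rfl⟩; exact ⟨L.1, L.2, rfl⟩
    · rintro ⟨M, hM, rfl⟩; exact ⟨⟨M, hM⟩, rfl⟩
  have hspan : Submodule.span ℂ (Set.range g) = ⊤ := by
    rw [hrange]; exact span_words_eq_top
  have hfin : FiniteDimensional ℂ (TL n d) := by
    have h1 : Module.Finite ℂ ↥(Submodule.span ℂ (Set.range g)) :=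
      Module.Finite.span_of_finite ℂ (Set.finite_range g)
    exact Module.Finite.equiv (LinearEquiv.ofTop _ hspan)
  refine ⟨hfin, ?_⟩
  haveI : Fintype NF := Fintype.ofFinite NF
  haveI : Fintype ↑(Set.range g) := Set.fintypeRange g
  have h5 : Module.finrank ℂ (TL n d) ≤ Fintype.card NF := by
    rw [← finrank_top ℂ (TL n d), ← hspan]
    refine le_trans (finrank_span_le_card _) ?_
    rw [Set.toFinset_range]
    exact le_trans Finset.card_image_le (by simp)
  rw [Nat.card_eq_fintype_card] at hcards
  omega
end
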